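/- arXiv:2406.03621 — 6 statements merged into one kernel-verified Lean document; each statement's English description precedes it below -/
import Mathlib

section
/- The iterated Burch ideals form a descending chain: defining BI^0(I) = n and BI^j(I) = nI : (I : BI^{j-1}(I)) for j ≥ 1, one has BI^j(I) ⊆ BI^{j-1}(I) for all j ≥ 1, provided BI^1(I) ⊆ n. -/
theorem Ideal.colon_colon_monotone {R : Type*} [Semiring R] (N I : Ideal R) :
    Monotone fun J : Set R => N.colon (I.colon J) :=
  fun _ _ hJ => Submodule.colon_mono le_rfl (Submodule.colon_mono le_rfl hJ)

theorem eq_iterate_of_succ_eq {α : Type*} {f : α → α} {x : ℕ → α}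
    (hx : ∀ n, x (n + 1) = f (x n)) (n : ℕ) : x n = f^[n] (x 0) := by
  induction n with
  | zero => rfl
  | succ n ih => rw [hx, ih, Function.iterate_succ_apply']

theorem antitone_of_succ_eq_of_monotone {α : Type*} [Preorder α] {f : α → α} {x : ℕ → α}
    (hf : Monotone f) (hx : ∀ n, x (n + 1) = f (x n)) (h10 : x 1 ≤ x 0) : Antitone x := by
  have hiter : x = fun n => f^[n] (x 0) := funext (eq_iterate_of_succ_eq hx)
  rw [hiter]
  exact hf.antitone_iterate_of_map_le (hx 0 ▸ h10)

/-- The iterated Burch ideals `BI^0(I) = n`, `BI^j(I) = nI : (I : BI^{j-1}(I))`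
form a descending chain, provided `BI^1(I) ⊆ n`. -/
theorem iterated_burch_descending {S : Type*} [CommRing S] [IsLocalRing S] (I : Ideal S)
    (B : ℕ → Ideal S)
    (hB0 : B 0 = IsLocalRing.maximalIdeal S)
    (hBsucc : ∀ j : ℕ, B (j + 1) = (IsLocalRing.maximalIdeal S * I).colon (I.colon (B j)))
    (hB1 : B 1 ≤ IsLocalRing.maximalIdeal S) :
    ∀ j : ℕ, 1 ≤ j → B j ≤ B (j - 1) := by
  have hmono : Monotone fun J : Ideal S =>
      (IsLocalRing.maximalIdeal S * I).colon (I.colon (J : Set S)) :=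
    (Ideal.colon_colon_monotone _ I).comp SetLike.coe_mono
  have hanti : Antitone B := antitone_of_succ_eq_of_monotone hmono hBsucc (hB0 ▸ hB1)
  exact fun j _ => hanti (Nat.sub_le j 1)
end

section
/- Let S = k[[x₁,...,x_{m-1}, y]] and I = (x₁y, ..., x_{m-1}y, y^{n+1}). Then (I : n) = (x₁y, ..., x_{m-1}y, y^n), where n = (x₁,...,x_{m-1}, y) is the maximal ideal. -/
open MvPowerSeries Finsupp

/-- Membership in an ideal generated by finitely many monomials in a multivariate
power series ring is characterized by divisibility of the supporting exponents. -/
theorem mem_span_monomials_iff_aux {σ k : Type*} [Field k] {ι : Type*} [Fintype ι]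
    (E : ι → (σ →₀ ℕ)) (f : MvPowerSeries σ k) :
    f ∈ Ideal.span (Set.range fun i => MvPowerSeries.monomial (E i) (1 : k)) ↔
      ∀ d, MvPowerSeries.coeff d f ≠ 0 → ∃ i, E i ≤ d := by
  classical
  constructor
  · intro hf
    refine Submodule.span_induction (p := fun g _ =>
      ∀ d, MvPowerSeries.coeff d g ≠ 0 → ∃ i, E i ≤ d) ?_ ?_ ?_ ?_ hf
    · rintro g ⟨i, rfl⟩ d hd
      have := eq_of_coeff_monomial_ne_zero hd
      exact ⟨i, this ▸ le_rfl⟩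
    · intro d hd
      simp at hd
    · intro a b _ _ ha hb d hd
      rw [map_add] at hd
      rcases (by by_contra h; push_neg at h; rw [h.1, h.2, add_zero] at hd; exact hd rfl :
        MvPowerSeries.coeff d a ≠ 0 ∨ MvPowerSeries.coeff d b ≠ 0) with h | h
      · exact ha d h
      · exact hb d h
    · intro c g _ hg d hd
      rw [smul_eq_mul, MvPowerSeries.coeff_mul] at hd
      obtain ⟨p, hp, hne⟩ := Finset.exists_ne_zero_of_sum_ne_zero hd
      obtain ⟨i, hi⟩ := hg p.2 (right_ne_zero_of_mul hne)
      rw [Finset.HasAntidiagonal.mem_antidiagonal] at hp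
      exact ⟨i, hi.trans (hp ▸ le_add_self)⟩
  · intro h
    by_cases hι : Nonempty ι
    · obtain ⟨i0⟩ := hι
      set pick : (σ →₀ ℕ) → ι := fun d => if h : ∃ i, E i ≤ d then h.choose else i0 with hpickdef
      have hpick : ∀ d, (∃ i, E i ≤ d) → E (pick d) ≤ d := by
        intro d hd
        rw [hpickdef]
        simp only [dif_pos hd]
        exact hd.choose_spec
      set g : ι → MvPowerSeries σ k := fun i c =>
        if pick (c + E i) = i then MvPowerSeries.coeff (c + E i) f else 0 with hgdef
      have hfeq : f = ∑ i, g i * MvPowerSeries.monomial (E i) 1 := by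
        ext d
        rw [map_sum]
        have hterm : ∀ i, MvPowerSeries.coeff d (g i * MvPowerSeries.monomial (E i) 1) =
            if E i ≤ d ∧ pick d = i then MvPowerSeries.coeff d f else 0 := by
          intro i
          rw [MvPowerSeries.coeff_mul_monomial]
          by_cases hle : E i ≤ d
          · rw [if_pos hle, mul_one, MvPowerSeries.coeff_apply, hgdef]
            simp only
            rw [tsub_add_cancel_of_le hle]
            by_cases hp : pick d = i
            · rw [if_pos hp, if_pos ⟨hle, hp⟩]
            · rw [if_neg hp, if_neg (by tauto)]
          · rw [if_neg hle, if_neg (by tauto)]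
        rw [Finset.sum_congr rfl fun i _ => hterm i]
        by_cases hc : MvPowerSeries.coeff d f = 0
        · rw [hc]
          simp
        · have hex : ∃ i, E i ≤ d := h d hc
          have hpd := hpick d hex
          have hstep : ∀ i, (if E i ≤ d ∧ pick d = i then MvPowerSeries.coeff d f else 0)
              = (if pick d = i then MvPowerSeries.coeff d f else 0) := by
            intro i
            by_cases hp : pick d = i
            · rw [if_pos ⟨hp ▸ hpd, hp⟩, if_pos hp]
            · rw [if_neg (by tauto), if_neg hp]
          rw [Finset.sum_congr rfl fun i _ => hstep i,
            Finset.sum_ite_eq Finset.univ (pick d) fun _ => MvPowerSeries.coeff d f,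
            if_pos (Finset.mem_univ _)]
      rw [hfeq]
      exact Ideal.sum_mem _ fun i _ =>
        Ideal.mul_mem_left _ _ (Ideal.subset_span ⟨i, rfl⟩)
    · have : f = 0 := by
        ext d
        by_contra hd
        exact hι ⟨(h d hd).choose⟩
      rw [this]
      exact Ideal.zero_mem _

/-- For `S = k[[x₁,…,x_{m-1},y]]` and `I = (x₁y,…,x_{m-1}y, y^{n+1})`, one has
`(I : n) = (x₁y,…,x_{m-1}y, y^n)` where `n = (x₁,…,x_{m-1},y)` is the maximal ideal.
Here the variables are indexed by `Option (Fin m')` with `y` corresponding to `none`. -/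
theorem colon_maximalIdeal_example (k : Type*) [Field k] (m' n : ℕ) (hn : 1 ≤ n) :
    let S := MvPowerSeries (Option (Fin m')) k
    let y : S := MvPowerSeries.X none
    let nmax : Ideal S := Ideal.span (Set.range (MvPowerSeries.X : Option (Fin m') → S))
    let I : Ideal S :=
      Ideal.span ((Set.range fun i : Fin m' => MvPowerSeries.X (some i) * y) ∪
        {y ^ (n + 1)})
    I.colon nmax =
      Ideal.span ((Set.range fun i : Fin m' => MvPowerSeries.X (some i) * y) ∪
        {y ^ n}) := by
  classical
  intro S y nmax I
  -- exponent functions for the two monomial ideals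
  set EE : ℕ → Option (Fin m') → (Option (Fin m') →₀ ℕ) := fun c j =>
    Option.elim j (Finsupp.single none c)
      (fun i => Finsupp.single (some i) 1 + Finsupp.single none 1) with hEE
  -- the generating sets are ranges of monomials
  have hset : ∀ c : ℕ,
      ((Set.range fun i : Fin m' => MvPowerSeries.X (some i) * y) ∪ {y ^ c} :
        Set S) = Set.range fun j : Option (Fin m') =>
          MvPowerSeries.monomial (EE c j) (1 : k) := by
    intro c
    ext g
    simp only [Set.mem_union, Set.mem_range, Set.mem_singleton_iff]
    constructor
    · rintro (⟨i, rfl⟩ | rfl)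
      · refine ⟨some i, ?_⟩
        simp only [hEE, Option.elim]
        show _ = MvPowerSeries.X (some i) * MvPowerSeries.X none
        rw [MvPowerSeries.X_def, MvPowerSeries.X_def,
          MvPowerSeries.monomial_mul_monomial, one_mul]
      · refine ⟨none, ?_⟩
        simp only [hEE, Option.elim]
        rw [MvPowerSeries.X_pow_eq]
    · rintro ⟨(_ | i), rfl⟩
      · right
        simp only [hEE, Option.elim]
        rw [MvPowerSeries.X_pow_eq]
      · left
        refine ⟨i, ?_⟩
        simp only [hEE, Option.elim]
        show MvPowerSeries.X (some i) * MvPowerSeries.X none = _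
        rw [MvPowerSeries.X_def, MvPowerSeries.X_def,
          MvPowerSeries.monomial_mul_monomial, one_mul]
  have hI : ∀ f : S, f ∈ I ↔
      ∀ d, MvPowerSeries.coeff d f ≠ 0 → ∃ j, EE (n + 1) j ≤ d := by
    intro f
    show f ∈ Ideal.span ((Set.range fun i : Fin m' => MvPowerSeries.X (some i) * y) ∪
      {y ^ (n + 1)}) ↔ _
    rw [hset (n + 1)]
    exact mem_span_monomials_iff_aux _ f
  -- helper: evaluating the inequalities
  have hle1 : ∀ (i : Fin m') (d : Option (Fin m') →₀ ℕ),
      (Finsupp.single (some i) 1 + Finsupp.single none 1 ≤ d) ↔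
        (1 ≤ d (some i) ∧ 1 ≤ d none) := by
    intro i d
    constructor
    · intro hd
      constructor
      · have := hd (some i)
        simpa using this
      · have := hd none
        simpa using this
    · rintro ⟨h1, h2⟩ j
      rcases j with _ | i'
      · simpa using h2
      · rcases eq_or_ne i i' with rfl | hne
        · simpa using h1
        · simp [Finsupp.single_apply, hne]
  have hle2 : ∀ (c : ℕ) (d : Option (Fin m') →₀ ℕ),
      (Finsupp.single (none : Option (Fin m')) c ≤ d) ↔ c ≤ d none :=
    fun c d => Finsupp.single_le_iff
  ext f
  rw [Submodule.mem_colon,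
    show Ideal.span ((Set.range fun i : Fin m' => MvPowerSeries.X (some i) * y) ∪ {y ^ n}) =
      Ideal.span (Set.range fun j : Option (Fin m') =>
        MvPowerSeries.monomial (EE n j) (1 : k)) from congrArg _ (hset n),
    mem_span_monomials_iff_aux]
  constructor
  · intro hf d hd
    -- from f * X j ∈ I for each j
    have key : ∀ j : Option (Fin m'), ∃ j', EE (n + 1) j' ≤ d + Finsupp.single j 1 := by
      intro j
      have hmem : f * MvPowerSeries.X j ∈ I := by
        have := hf (MvPowerSeries.X j) (Ideal.subset_span ⟨j, rfl⟩)
        rwa [smul_eq_mul] at this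
      have hco : MvPowerSeries.coeff (d + Finsupp.single j 1)
          (f * MvPowerSeries.X j) ≠ 0 := by
        rw [MvPowerSeries.X_def, MvPowerSeries.coeff_add_mul_monomial, mul_one]
        exact hd
      exact (hI _).mp hmem _ hco
    obtain ⟨j', hj'⟩ := key none
    rcases j' with _ | i
    · -- y^{n+1} divides d + single none 1, so y^n divides d
      refine ⟨none, ?_⟩
      rw [hEE] at hj' ⊢
      simp only [Option.elim] at hj' ⊢
      rw [hle2] at hj' ⊢
      simp [Finsupp.add_apply, Finsupp.single_apply] at hj'
      omega
    · -- x_i y divides d + single none 1, so 1 ≤ d (some i)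
      have hi : 1 ≤ d (some i) := by
        rw [hEE] at hj'
        simp only [Option.elim] at hj'
        rw [hle1] at hj'
        have := hj'.1
        simpa using this
      -- now use j = some i to get 1 ≤ d none
      obtain ⟨j₂, hj₂⟩ := key (some i)
      have hnone : 1 ≤ d none := by
        rcases j₂ with _ | i₂
        · rw [hEE] at hj₂
          simp only [Option.elim] at hj₂
          rw [hle2] at hj₂
          simp [Finsupp.add_apply, Finsupp.single_apply] at hj₂
          omega
        · rw [hEE] at hj₂
          simp only [Option.elim] at hj₂
          rw [hle1] at hj₂
          have := hj₂.2
          simpa using this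
      refine ⟨some i, ?_⟩
      rw [hEE]
      simp only [Option.elim]
      rw [hle1]
      exact ⟨hi, hnone⟩
  · intro h p hp
    rw [smul_eq_mul]
    refine Submodule.span_induction (p := fun q _ => f * q ∈ I) ?_ ?_ ?_ ?_ hp
    · rintro q ⟨j, rfl⟩
      rw [hI]
      intro d' hd'
      rw [MvPowerSeries.X_def, MvPowerSeries.coeff_mul_monomial] at hd'
      by_cases hle : Finsupp.single j 1 ≤ d'
      · rw [if_pos hle, mul_one] at hd'
        obtain ⟨j', hj'⟩ := h _ hd'
        rcases j' with _ | i
        · -- y^n ≤ d' - single j 1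
          rw [hEE] at hj'
          simp only [Option.elim] at hj'
          rw [hle2] at hj'
          rw [Finsupp.tsub_apply] at hj'
          rcases j with _ | i
          · refine ⟨none, ?_⟩
            rw [hEE]
            simp only [Option.elim]
            rw [hle2]
            have h1 : 1 ≤ d' none := by
              have := hle none
              simpa using this
            simp [Finsupp.single_apply] at hj'
            omega
          · refine ⟨some i, ?_⟩
            rw [hEE]
            simp only [Option.elim]
            rw [hle1]
            have h1 : 1 ≤ d' (some i) := by
              have := hle (some i)
              simpa using this
            simp [Finsupp.single_apply] at hj'
            exact ⟨h1, by omega⟩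
        · exact ⟨some i, hj'.trans tsub_le_self⟩
      · rw [if_neg hle] at hd'
        exact absurd rfl hd'
    · show f * 0 ∈ I
      rw [mul_zero]; exact Ideal.zero_mem _
    · intro a b _ _ ha hb
      show f * (a + b) ∈ I
      rw [mul_add]; exact Ideal.add_mem _ ha hb
    · intro r q _ hq
      show f * (r • q) ∈ I
      rw [smul_eq_mul, mul_left_comm]
      exact Ideal.mul_mem_left _ _ hq
end

section
/- Let S = k[[x₁,...,x_{m-1}, y]] with maximal ideal n and I = (x₁y, ..., x_{m-1}y, y^{n+1}). Then the Burch ideal BI(I) = nI : (I : n) equals (x₁, ..., x_{m-1}, y²), and hence the Burch index length(n / BI(I)) equals 1. -/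
open MvPowerSeries

section Helpers
open MvPowerSeries Finsupp
variable {σ : Type*} {R : Type*} [CommRing R]

lemma add_eq_single' {a b : σ →₀ ℕ} {s : σ} {t : ℕ} (h : a + b = Finsupp.single s t) :
    ∃ u v, u + v = t ∧ a = Finsupp.single s u ∧ b = Finsupp.single s v := by
  classical
  refine ⟨a s, b s, ?_, ?_, ?_⟩
  · have := DFunLike.congr_fun h s
    simpa using this
  · ext j
    by_cases hj : j = s
    · subst hj; simp
    · have := DFunLike.congr_fun h j
      simp [Finsupp.single_apply, hj, Ne.symm hj] at this ⊢
      omega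
  · ext j
    by_cases hj : j = s
    · subst hj; simp
    · have := DFunLike.congr_fun h j
      simp [Finsupp.single_apply, hj, Ne.symm hj] at this ⊢
      omega

lemma coeff_single_mul_zero {φ ψ : MvPowerSeries σ R} {s : σ} {t : ℕ}
    (h : ∀ u ≤ t, coeff (Finsupp.single s u) ψ = 0) :
    coeff (Finsupp.single s t) (φ * ψ) = 0 := by
  classical
  rw [coeff_mul]
  refine Finset.sum_eq_zero ?_
  rintro ⟨a, b⟩ hab
  rw [Finset.HasAntidiagonal.mem_antidiagonal] at hab
  obtain ⟨u, v, huv, rfl, rfl⟩ := add_eq_single' hab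
  rw [h v (by omega), mul_zero]

lemma coeff_X_pow_mul_ite {s : σ} (t : ℕ) (d : σ →₀ ℕ) (φ : MvPowerSeries σ R) :
    coeff d (X s ^ t * φ) =
      if Finsupp.single s t ≤ d then coeff (d - Finsupp.single s t) φ else 0 := by
  classical
  rw [coeff_mul]
  split_ifs with h
  · rw [Finset.sum_eq_single (Finsupp.single s t, d - Finsupp.single s t)]
    · rw [coeff_X_pow, if_pos rfl, one_mul]
    · rintro ⟨a, b⟩ hab hne
      rw [Finset.HasAntidiagonal.mem_antidiagonal] at hab
      rw [coeff_X_pow]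
      split_ifs with ha
      · exact absurd (by subst ha; exact Prod.ext rfl (by rw [← hab]; simp)) hne
      · exact zero_mul _
    · intro hmem
      exact absurd (Finset.HasAntidiagonal.mem_antidiagonal.2 (by rw [add_tsub_cancel_of_le h])) hmem
  · refine Finset.sum_eq_zero ?_
    rintro ⟨a, b⟩ hab
    rw [Finset.HasAntidiagonal.mem_antidiagonal] at hab
    rw [coeff_X_pow]
    split_ifs with ha
    · exact absurd (ha ▸ hab ▸ le_add_self.trans_eq (add_comm b a)) h
    · exact zero_mul _

lemma coeff_add_single_X_pow_mul {s : σ} (t : ℕ) (e : σ →₀ ℕ) (φ : MvPowerSeries σ R) :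
    coeff (e + Finsupp.single s t) (X s ^ t * φ) = coeff e φ := by
  rw [coeff_X_pow_mul_ite, if_pos le_add_self, add_tsub_cancel_right]

open scoped Classical in
noncomputable def decompAux [LinearOrder σ] (f : MvPowerSeries σ R) (i : σ) :
    MvPowerSeries σ R :=
  fun e => if ∀ j < i, e j = 0 then coeff (e + Finsupp.single i 1) f else 0

open scoped Classical in
lemma coeff_decompAux [LinearOrder σ] (f : MvPowerSeries σ R) (i : σ) (e : σ →₀ ℕ) :
    coeff e (decompAux f i) =
      if ∀ j < i, e j = 0 then coeff (e + Finsupp.single i 1) f else 0 :=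
  rfl

lemma exists_decomp [Fintype σ] [LinearOrder σ] (f : MvPowerSeries σ R)
    (hf : constantCoeff f = 0) :
    ∃ g : σ → MvPowerSeries σ R, f = ∑ i, X i * g i := by
  classical
  refine ⟨decompAux f, ?_⟩
  ext d
  rw [map_sum]
  have hterm : ∀ i, coeff d (X i * decompAux f i) =
      if 1 ≤ d i ∧ ∀ j < i, d j = 0 then coeff d f else 0 := by
    intro i
    rw [← pow_one (X i : MvPowerSeries σ R), coeff_X_pow_mul_ite]
    by_cases h1 : Finsupp.single i 1 ≤ d
    · rw [if_pos h1, coeff_decompAux]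
      have hdi : 1 ≤ d i := by simpa using Finsupp.single_le_iff.mp h1
      have hsub : ∀ j, j ≠ i → (d - Finsupp.single i 1 : σ →₀ ℕ) j = d j := by
        intro j hj
        simp [Finsupp.tsub_apply, Finsupp.single_apply, hj, Ne.symm hj]
      by_cases h2 : ∀ j < i, d j = 0
      · rw [if_pos (by intro j hji; rw [hsub j (ne_of_lt hji)]; exact h2 j hji),
          if_pos ⟨hdi, h2⟩, tsub_add_cancel_of_le h1]
      · rw [if_neg, if_neg (by tauto)]
        intro hc
        exact h2 (fun j hji => by rw [← hsub j (ne_of_lt hji)]; exact hc j hji)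
    · rw [if_neg h1, if_neg]
      rintro ⟨hdi, -⟩
      exact h1 (Finsupp.single_le_iff.mpr (by simpa using hdi))
  simp_rw [hterm]
  by_cases hd : d = 0
  · subst hd
    rw [Finset.sum_eq_zero (fun i _ => by rw [if_neg (by simp)])]
    rw [← coeff_zero_eq_constantCoeff] at hf
    exact hf
  · have hsupp : d.support.Nonempty := Finsupp.support_nonempty_iff.mpr hd
    set i₀ := d.support.min' hsupp with hi₀
    have hi₀mem : i₀ ∈ d.support := d.support.min'_mem hsupp
    have hdi₀ : d i₀ ≠ 0 := Finsupp.mem_support_iff.mp hi₀mem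
    rw [Finset.sum_eq_single i₀]
    · rw [if_pos ⟨by omega, fun j hj => by
        by_contra hc
        exact absurd (d.support.min'_le j (Finsupp.mem_support_iff.mpr hc)) (not_le.mpr hj)⟩]
    · intro i _ hne
      rw [if_neg]
      rintro ⟨hdi, hall⟩
      have : i₀ ≤ i := d.support.min'_le i (Finsupp.mem_support_iff.mpr (by omega))
      exact hdi₀ (hall i₀ (lt_of_le_of_ne this (Ne.symm hne)))
    · intro h; exact absurd (Finset.mem_univ i₀) h

lemma mem_span_X [Fintype σ] [LinearOrder σ] {f : MvPowerSeries σ R}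
    (hf : constantCoeff f = 0) :
    f ∈ Ideal.span (Set.range (X : σ → MvPowerSeries σ R)) := by
  obtain ⟨g, rfl⟩ := exists_decomp f hf
  exact Ideal.sum_mem _ fun i _ =>
    Ideal.mul_mem_right _ _ (Ideal.subset_span ⟨i, rfl⟩)

lemma single_ne_single_of_ne {s s' : σ} (h : s ≠ s') {t : ℕ} {t' : ℕ} (ht' : t' ≠ 0) :
    Finsupp.single s t ≠ Finsupp.single s' t' := by
  intro hc
  have := DFunLike.congr_fun hc s'
  simp [Finsupp.single_apply, h, Ne.symm h] at this
  exact ht' this.symm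


end Helpers

/-- For `S = k[[x₁,…,x_{m-1},y]]` and `I = (x₁y,…,x_{m-1}y, y^{n+1})` with `n ≥ 2`,
the Burch ideal `BI(I) = nI : (I : n)` equals `(x₁,…,x_{m-1}, y²)`, and the Burch index
`length(n / BI(I))` equals `1`, i.e. `BI(I)` is covered by `n` in the lattice of ideals.
Variables are indexed by `Option (Fin m')` with `y` corresponding to `none`. -/
theorem burch_ideal_example (k : Type*) [Field k] (m' n : ℕ) (hn : 2 ≤ n) :
    let S := MvPowerSeries (Option (Fin m')) k
    let y : S := MvPowerSeries.X none
    let nmax : Ideal S := Ideal.span (Set.range (MvPowerSeries.X : Option (Fin m') → S))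
    let I : Ideal S :=
      Ideal.span ((Set.range fun i : Fin m' => MvPowerSeries.X (some i) * y) ∪
        {y ^ (n + 1)})
    let BI : Ideal S := (nmax * I).colon (I.colon nmax)
    BI = Ideal.span ((Set.range fun i : Fin m' => MvPowerSeries.X (some i)) ∪ {y ^ 2}) ∧
      BI ⋖ nmax := by
  classical
  letI : LinearOrder (Option (Fin m')) := inferInstanceAs (LinearOrder (WithBot (Fin m')))
  intro S y nmax I BI
  set σ := Option (Fin m')
  set J : Ideal S :=
    Ideal.span ((Set.range fun i : Fin m' => MvPowerSeries.X (some i)) ∪ {y ^ 2}) with hJ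
  obtain ⟨n', rfl⟩ : ∃ n', n = n' + 2 := ⟨n - 2, by omega⟩
  -- single shorthand
  -- coeff of pure y monomials on x_j
  have hcoeffX : ∀ (j : Fin m') (t : ℕ), coeff (Finsupp.single (none : σ) t)
      (X (some j) : S) = 0 := by
    intro j t
    rw [coeff_X, if_neg (single_ne_single_of_ne (by simp) one_ne_zero)]
  -- elements of nmax have zero constant coefficient
  have hconst : ∀ f ∈ nmax, constantCoeff f = 0 := by
    intro f hf
    have : nmax ≤ RingHom.ker (constantCoeff (σ := σ) (R := k)) :=
      Ideal.span_le.mpr (by rintro _ ⟨i, rfl⟩; exact RingHom.mem_ker.mpr (constantCoeff_X i))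
    exact this hf
  -- elements of I vanish on pure y monomials of degree < n+1
  have hIy : ∀ f ∈ I, ∀ t < n' + 3, coeff (Finsupp.single (none : σ) t) f = 0 := by
    intro f hf
    refine Submodule.span_induction ?_ ?_ ?_ ?_ hf
    · rintro s (⟨j, rfl⟩ | rfl) t ht
      · show coeff (Finsupp.single (none : σ) t) (X (some j) * y) = 0
        rw [mul_comm]
        exact coeff_single_mul_zero (fun u _ => hcoeffX j u)
      · rw [coeff_X_pow, if_neg (by
          intro hc
          have := DFunLike.congr_fun hc (none : σ)
          simp at this
          omega)]
    · intro t ht; simp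
    · intro a b _ _ ha hb t ht
      rw [map_add, ha t ht, hb t ht, add_zero]
    · intro r x _ hx t ht
      rw [smul_eq_mul]
      exact coeff_single_mul_zero (fun u hu => hx u (by omega))
  -- elements of nmax * I vanish on pure y monomials of degree < n+2
  have hnIy : ∀ f ∈ nmax * I, ∀ t < n' + 4, coeff (Finsupp.single (none : σ) t) f = 0 := by
    intro f hf
    refine Submodule.mul_induction_on hf ?_ ?_
    · intro a ha b hb t ht
      rw [coeff_mul]
      refine Finset.sum_eq_zero ?_
      rintro ⟨c, d⟩ hcd
      rw [Finset.HasAntidiagonal.mem_antidiagonal] at hcd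
      obtain ⟨u, v, huv, rfl, rfl⟩ := add_eq_single' hcd
      by_cases hv : v < n' + 3
      · rw [hIy b hb v hv, mul_zero]
      · have hu : u = 0 := by omega
        subst hu
        rw [Finsupp.single_zero, coeff_zero_eq_constantCoeff, hconst a ha, zero_mul]
    · intro a b ha hb t ht
      rw [map_add, ha t ht, hb t ht, add_zero]
  -- membership criterion for J
  have hJmem : ∀ f : S, coeff 0 f = 0 → coeff (Finsupp.single (none : σ) 1) f = 0 →
      f ∈ J := by
    intro f h0 h1
    obtain ⟨g, hg⟩ := exists_decomp f (by rwa [← coeff_zero_eq_constantCoeff])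
    rw [hg, Fintype.sum_option]
    have hA : ∀ j : Fin m', (X (some j) * g (some j) : S) ∈ J := fun j =>
      Ideal.mul_mem_right _ _ (Ideal.subset_span (Or.inl ⟨j, rfl⟩))
    refine add_mem ?_ (Ideal.sum_mem _ fun j _ => hA j)
    -- constant coefficient of g none is zero
    have hgy : constantCoeff (g none) = 0 := by
      have h1' : coeff (Finsupp.single (none : σ) 1) (X (none : σ) * g none : S) = 0 := by
        have hsum : coeff (Finsupp.single (none : σ) 1) f =
            coeff (Finsupp.single (none : σ) 1) (X (none : σ) * g none : S) +
            ∑ j : Fin m', coeff (Finsupp.single (none : σ) 1)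
              (X (some j) * g (some j) : S) := by
          rw [hg, Fintype.sum_option, map_add, map_sum]
        have hz : ∀ j : Fin m', coeff (Finsupp.single (none : σ) 1)
            (X (some j) * g (some j) : S) = 0 := by
          intro j
          exact X_dvd_iff.mp (dvd_mul_right _ _) _ (by simp [Finsupp.single_apply])
        rw [h1, Finset.sum_congr rfl (fun j _ => hz j), Finset.sum_const_zero, add_zero]
          at hsum
        exact hsum.symm
      rw [← pow_one (X (none : σ) : S), ← zero_add (Finsupp.single (none : σ) 1),
        coeff_add_single_X_pow_mul, coeff_zero_eq_constantCoeff] at h1'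
      exact h1'
    obtain ⟨h, hh⟩ := exists_decomp (g none) hgy
    rw [hh, Finset.mul_sum]
    refine Ideal.sum_mem _ ?_
    intro i _
    match i with
    | Option.none =>
      have : (X (none : σ) : S) * (X (none : σ) * h none) = y ^ 2 * h none := by
        simp only [y]; ring
      rw [this]
      exact Ideal.mul_mem_right _ _ (Ideal.subset_span (Or.inr rfl))
    | Option.some j =>
      have : (X (none : σ) : S) * (X (Option.some j) * h (Option.some j)) =
          X (Option.some j) * (X (none : σ) * h (Option.some j)) := by ring
      rw [this]
      exact Ideal.mul_mem_right _ _ (Ideal.subset_span (Or.inl ⟨j, rfl⟩))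
  -- elements of J vanish on the constant and y coefficients
  have hJcoeff : ∀ f ∈ J, coeff 0 f = 0 ∧ coeff (Finsupp.single (none : σ) 1) f = 0 := by
    intro f hf
    refine Submodule.span_induction ?_ ?_ ?_ ?_ hf
    · rintro s (⟨j, rfl⟩ | rfl)
      · constructor
        · rw [coeff_zero_eq_constantCoeff]; simp
        · exact hcoeffX j 1
      · constructor
        · rw [coeff_zero_eq_constantCoeff]; simp [y]
        · simp only [y]
          rw [coeff_X_pow, if_neg (by
            intro hc
            have := DFunLike.congr_fun hc (none : σ)
            simp at this)]
    · simp
    · intro a b _ _ ha hb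
      rw [map_add, map_add, ha.1, ha.2, hb.1, hb.2]
      simp
    · intro r x _ hx
      rw [smul_eq_mul]
      constructor
      · rw [coeff_zero_eq_constantCoeff, map_mul]
        rw [coeff_zero_eq_constantCoeff] at hx
        rw [hx.1, mul_zero]
      · refine coeff_single_mul_zero ?_
        intro u hu
        interval_cases u
        · rw [Finsupp.single_zero]; exact hx.1
        · exact hx.2
  have hy : y = X (none : σ) := rfl
  have hymem : y ∈ nmax := Ideal.subset_span ⟨none, rfl⟩
  -- J ≤ BI
  have hJBI : J ≤ BI := by
    rw [hJ, Ideal.span_le]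
    rintro s (⟨i, rfl⟩ | rfl)
    · show X (Option.some i) ∈ BI
      apply Submodule.mem_colon.mpr
      intro f hf
      rw [smul_eq_mul]
      have hfy : f * y ∈ I := by
        have := Submodule.mem_colon.mp hf y hymem
        rwa [smul_eq_mul] at this
      have hfx : f * X (Option.some i) ∈ I := by
        have := Submodule.mem_colon.mp hf (X (Option.some i))
          (Ideal.subset_span ⟨Option.some i, rfl⟩)
        rwa [smul_eq_mul] at this
      have hIy' : I ≤ Ideal.span {y} := by
        rw [Ideal.span_le]
        rintro s (⟨j, rfl⟩ | rfl)
        · show X (Option.some j) * y ∈ Ideal.span {y}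
          exact Ideal.mem_span_singleton.mpr (dvd_mul_left y _)
        · exact Ideal.mem_span_singleton.mpr (dvd_pow_self y (by omega))
      have hyf : (X (none : σ) : S) ∣ f := by
        rw [X_dvd_iff]
        intro m hm
        have hdvd : (X (none : σ) : S) ∣ f * X (Option.some i) := by
          rw [← hy]
          exact Ideal.mem_span_singleton.mp (hIy' hfx)
        have h0 := X_dvd_iff.mp hdvd (m + Finsupp.single (Option.some i : σ) 1)
          (by simp [hm, Finsupp.single_apply])
        rwa [mul_comm, ← pow_one (X (Option.some i) : S), coeff_add_single_X_pow_mul] at h0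
      obtain ⟨h, rfl⟩ := hyf
      have hch : constantCoeff h = 0 := by
        have h2 : coeff (Finsupp.single (none : σ) 2) (X (none : σ) * h * y) = 0 :=
          hIy _ hfy 2 (by omega)
        have he : (X (none : σ) : S) * h * y = X (none : σ) ^ 2 * h := by
          rw [hy]; ring
        have h3 := coeff_add_single_X_pow_mul (s := (none : σ)) 2 0 h
        rw [zero_add] at h3
        rw [he, h3, coeff_zero_eq_constantCoeff] at h2
        exact h2
      have hhn : h ∈ nmax := mem_span_X hch
      have he2 : X (Option.some i) * (X (none : σ) * h) = h * (X (Option.some i) * y) := by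
        rw [hy]; ring
      rw [he2]
      exact Ideal.mul_mem_mul hhn (Ideal.subset_span (Or.inl ⟨i, rfl⟩))
    · apply Submodule.mem_colon.mpr
      intro f hf
      have hfy : f * y ∈ I := by
        have := Submodule.mem_colon.mp hf y hymem
        rwa [smul_eq_mul] at this
      have he : y ^ 2 • f = y * (f * y) := by rw [smul_eq_mul]; ring
      rw [he]
      exact Ideal.mul_mem_mul hymem hfy
  -- BI ≤ J
  have hBIJ : BI ≤ J := by
    intro f hf
    have hyn : (y ^ (n' + 2) : S) ∈ Submodule.colon I nmax := by
      apply Submodule.mem_colon.mpr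
      intro p hp
      rw [smul_eq_mul]
      refine Submodule.span_induction ?_ ?_ ?_ ?_ hp
      · rintro s ⟨i, rfl⟩
        match i with
        | Option.none =>
          have he : (y : S) ^ (n' + 2) * X (none : σ) = y ^ (n' + 2 + 1) := by
            rw [hy]; ring
          rw [he]; exact Ideal.subset_span (Or.inr rfl)
        | Option.some j =>
          have he : (y : S) ^ (n' + 2) * X (Option.some j) =
              (X (Option.some j) * y) * y ^ (n' + 1) := by ring
          rw [he]
          exact Ideal.mul_mem_right _ _ (Ideal.subset_span (Or.inl ⟨j, rfl⟩))
      · simp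
      · intro a b _ _ ha hb; rw [mul_add]; exact add_mem ha hb
      · intro r x _ hx
        rw [smul_eq_mul]
        have he : (y : S) ^ (n' + 2) * (r * x) = r * (y ^ (n' + 2) * x) := by ring
        rw [he]
        exact Ideal.mul_mem_left _ _ hx
    have hfyn := Submodule.mem_colon.mp hf _ hyn
    rw [smul_eq_mul] at hfyn
    have h0 : coeff 0 f = 0 := by
      have h1 := hnIy _ hfyn (n' + 2) (by omega)
      have h3 := coeff_add_single_X_pow_mul (R := k) (s := (none : σ)) (n' + 2) 0 f
      rw [zero_add] at h3
      rw [hy, mul_comm] at h1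
      rw [← h3]
      exact h1
    have h1 : coeff (Finsupp.single (none : σ) 1) f = 0 := by
      have h2 := hnIy _ hfyn (n' + 3) (by omega)
      have hs : (Finsupp.single (none : σ) (n' + 3)) =
          Finsupp.single (none : σ) 1 + Finsupp.single (none : σ) (n' + 2) := by
        rw [← Finsupp.single_add]
        congr 1
        omega
      rw [hs, hy, mul_comm, coeff_add_single_X_pow_mul] at h2
      exact h2
    exact hJmem f h0 h1
  refine ⟨le_antisymm hBIJ hJBI, ?_⟩
  have hBIeq : BI = J := le_antisymm hBIJ hJBI
  rw [hBIeq]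
  have hyJ : y ∉ J := by
    intro hyJ'
    have := (hJcoeff y hyJ').2
    rw [hy, coeff_X, if_pos rfl] at this
    exact one_ne_zero this
  have hJn : J ≤ nmax := by
    rw [hJ, Ideal.span_le]
    rintro s (⟨i, rfl⟩ | rfl)
    · exact Ideal.subset_span ⟨Option.some i, rfl⟩
    · rw [pow_two]
      exact Ideal.mul_mem_left _ _ hymem
  constructor
  · exact lt_of_le_of_ne hJn (fun he => hyJ (he ▸ hymem))
  · intro c hc1 hc2
    obtain ⟨f, hfc, hfJ⟩ := SetLike.exists_of_lt hc1
    have hfn : f ∈ nmax := hc2.le hfc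
    have h0 : coeff 0 f = 0 := by
      rw [coeff_zero_eq_constantCoeff]
      exact hconst f hfn
    have h1ne : coeff (Finsupp.single (none : σ) 1) f ≠ 0 := fun h1 => hfJ (hJmem f h0 h1)
    set c₀ := coeff (Finsupp.single (none : σ) 1) f with hc₀
    have hg : f - C c₀ * y ∈ J := by
      apply hJmem
      · rw [map_sub, h0, coeff_C_mul, hy, coeff_zero_eq_constantCoeff, constantCoeff_X,
          mul_zero, sub_zero]
      · rw [map_sub, coeff_C_mul, hy, coeff_X, if_pos rfl, mul_one, ← hc₀, sub_self]
    have hCy : C c₀ * y ∈ c := by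
      have := sub_mem hfc (hc1.le hg)
      simpa using this
    have hyc : y ∈ c := by
      have he : (C c₀⁻¹) * (C c₀ * y) = y := by
        rw [← mul_assoc, ← map_mul, inv_mul_cancel₀ h1ne, map_one, one_mul]
      rw [← he]
      exact Ideal.mul_mem_left _ _ hCy
    have hle : nmax ≤ c := by
      rw [Ideal.span_le]
      rintro s ⟨i, rfl⟩
      match i with
      | Option.none => exact hyc
      | Option.some j => exact hc1.le (Ideal.subset_span (Or.inl ⟨j, rfl⟩))
    exact hc2.not_ge hle
end

section
/- Let S = k[[x,y,z]], I = (x²y, xy²z, z³), N = (x², y, z²). Then nI : (I : N) = (x, z², yz, y²), where n = (x,y,z). -/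
open MvPowerSeries

namespace BurchAux

variable {k : Type*} [Field k]

/-- shorthand for a monomial with coefficient 1 -/
noncomputable def M (a : Fin 3 →₀ ℕ) : MvPowerSeries (Fin 3) k :=
  MvPowerSeries.monomial a 1

lemma coeff_M (e a : Fin 3 →₀ ℕ) :
    coeff e (M a : MvPowerSeries (Fin 3) k) = if e = a then 1 else 0 := by
  classical
  simp [M, MvPowerSeries.coeff_monomial]

/-- Membership in a monomial ideal of a power series ring. -/
lemma mem_span_mono {m : ℕ} (hm : 0 < m) (A : Fin m → (Fin 3 →₀ ℕ))
    (f : MvPowerSeries (Fin 3) k) :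
    f ∈ Ideal.span (Set.range fun i => (M (A i) : MvPowerSeries (Fin 3) k)) ↔
      ∀ e, coeff e f ≠ 0 → ∃ i, A i ≤ e := by
  classical
  constructor
  · intro hf
    induction hf using Submodule.span_induction with
    | mem g hg =>
      obtain ⟨i, rfl⟩ := hg
      intro e he
      rw [coeff_M] at he
      by_cases h : e = A i
      · exact ⟨i, h.ge⟩
      · simp [h] at he
    | zero => simp
    | add a b _ _ ha hb =>
      intro e he
      rw [map_add] at he
      rcases (by by_contra hc; push_neg at hc; rw [hc.1, hc.2] at he; simp at he :
        coeff e a ≠ 0 ∨ coeff e b ≠ 0) with h | h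
      · exact ha e h
      · exact hb e h
    | smul r g _ hg =>
      intro e he
      rw [smul_eq_mul, MvPowerSeries.coeff_mul] at he
      obtain ⟨p, hp, hpne⟩ := Finset.exists_ne_zero_of_sum_ne_zero he
      obtain ⟨i, hi⟩ := hg p.2 (right_ne_zero_of_mul hpne)
      rw [Finset.HasAntidiagonal.mem_antidiagonal] at hp
      exact ⟨i, hi.trans (hp ▸ le_add_self)⟩
  · intro h
    set pick : (Fin 3 →₀ ℕ) → Fin m := fun e =>
      if he : ∃ i, A i ≤ e then he.choose else ⟨0, hm⟩ with hpickdef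
    have hpick : ∀ e, (∃ i, A i ≤ e) → A (pick e) ≤ e := by
      intro e he
      rw [hpickdef]
      simp only [dif_pos he]
      exact he.choose_spec
    set g : Fin m → MvPowerSeries (Fin 3) k := fun i =>
      (fun e' => if pick (e' + A i) = i ∧ coeff (e' + A i) f ≠ 0
        then coeff (e' + A i) f else 0) with hgdef
    have hcg : ∀ i e', coeff e' (g i) =
        if pick (e' + A i) = i ∧ coeff (e' + A i) f ≠ 0
        then coeff (e' + A i) f else 0 := fun i e' => rfl
    have hterm : ∀ i e, coeff e ((M (A i) : MvPowerSeries (Fin 3) k) * g i) =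
        if A i ≤ e ∧ pick e = i ∧ coeff e f ≠ 0 then coeff e f else 0 := by
      intro i e
      rw [M, MvPowerSeries.coeff_monomial_mul]
      by_cases hle : A i ≤ e
      · rw [if_pos hle, hcg, tsub_add_cancel_of_le hle, one_mul]
        by_cases hc : pick e = i ∧ coeff e f ≠ 0
        · rw [if_pos hc, if_pos ⟨hle, hc⟩]
        · rw [if_neg hc, if_neg (fun hh => hc ⟨hh.2.1, hh.2.2⟩)]
      · rw [if_neg hle, if_neg (fun hh => hle hh.1)]
    have hf : f = ∑ i, (M (A i) : MvPowerSeries (Fin 3) k) * g i := by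
      ext e
      rw [map_sum (coeff e)]
      simp only [hterm]
      by_cases hce : coeff e f = 0
      · rw [hce]
        refine (Finset.sum_eq_zero ?_).symm
        intro i _
        exact if_neg (fun hh => hh.2.2 rfl)
      · have hex : ∃ i, A i ≤ e := h e hce
        rw [Finset.sum_eq_single (pick e)
            (fun i _ hne => if_neg (fun hh => hne hh.2.1.symm))
            (fun hmem => absurd (Finset.mem_univ _) hmem),
          if_pos ⟨hpick e hex, rfl, hce⟩]
    rw [hf]
    exact Ideal.sum_mem _ fun i _ =>
      Ideal.mul_mem_right _ _ (Ideal.subset_span ⟨i, rfl⟩)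

lemma mul_mono_mem_iff {m : ℕ} (hm : 0 < m) (A : Fin m → (Fin 3 →₀ ℕ))
    (a : Fin 3 →₀ ℕ) (f : MvPowerSeries (Fin 3) k) :
    f * M a ∈ Ideal.span (Set.range fun i => (M (A i) : MvPowerSeries (Fin 3) k)) ↔
      ∀ e, coeff e f ≠ 0 → ∃ i, A i ≤ e + a := by
  rw [mem_span_mono hm]
  constructor
  · intro h e he
    refine h (e + a) ?_
    rw [M, MvPowerSeries.coeff_mul_monomial, if_pos le_add_self,
      add_tsub_cancel_right, mul_one]
    exact he
  · intro h e he
    rw [M, MvPowerSeries.coeff_mul_monomial] at he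
    by_cases hae : a ≤ e
    · rw [if_pos hae, mul_one] at he
      obtain ⟨i, hi⟩ := h (e - a) he
      rw [tsub_add_cancel_of_le hae] at hi
      exact ⟨i, hi⟩
    · rw [if_neg hae] at he; exact absurd rfl he

lemma mem_colon_span {I : Ideal (MvPowerSeries (Fin 3) k)}
    {s : Set (MvPowerSeries (Fin 3) k)} {f : MvPowerSeries (Fin 3) k} :
    f ∈ I.colon (Ideal.span s) ↔ ∀ g ∈ s, f * g ∈ I := by
  rw [Submodule.mem_colon]
  constructor
  · intro h g hg
    simpa using h g (Ideal.subset_span hg)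
  · intro h p hp
    induction hp using Submodule.span_induction with
    | mem g hg => simpa using h g hg
    | zero => simp
    | add a b _ _ ha hb => rw [smul_add]; exact I.add_mem ha hb
    | smul r g _ hg =>
      rw [smul_eq_mul, smul_eq_mul, mul_left_comm]
      exact I.mul_mem_left r hg

/-- exponent vectors -/
noncomputable def EE (a b c : ℕ) : Fin 3 →₀ ℕ :=
  Finsupp.single 0 a + Finsupp.single 1 b + Finsupp.single 2 c

lemma EE_apply (a b c : ℕ) :
    EE a b c 0 = a ∧ EE a b c 1 = b ∧ EE a b c 2 = c := by
  refine ⟨?_, ?_, ?_⟩ <;> simp [EE, Finsupp.single_apply]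

lemma EE_le (a b c : ℕ) (e : Fin 3 →₀ ℕ) :
    EE a b c ≤ e ↔ a ≤ e 0 ∧ b ≤ e 1 ∧ c ≤ e 2 := by
  rw [Finsupp.le_def]
  constructor
  · intro h
    refine ⟨?_, ?_, ?_⟩
    · simpa [(EE_apply a b c).1] using h 0
    · simpa [(EE_apply a b c).2.1] using h 1
    · simpa [(EE_apply a b c).2.2] using h 2
  · intro h i
    fin_cases i
    · simpa [(EE_apply a b c).1] using h.1
    · simpa [(EE_apply a b c).2.1] using h.2.1
    · simpa [(EE_apply a b c).2.2] using h.2.2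

lemma EE_add (a b c d e f : ℕ) : EE a b c + EE d e f = EE (a + d) (b + e) (c + f) := by
  ext i
  fin_cases i <;>
    simp [EE, Finsupp.single_apply]

lemma M_mul (a b c d e f : ℕ) :
    (M (EE a b c) : MvPowerSeries (Fin 3) k) * M (EE d e f) = M (EE (a + d) (b + e) (c + f)) := by
  rw [M, M, M, MvPowerSeries.monomial_mul_monomial, one_mul, EE_add]

lemma X_eq_M (i : Fin 3) (n : ℕ) :
    (MvPowerSeries.X i : MvPowerSeries (Fin 3) k) ^ n =
      M (Finsupp.single i n) := by
  rw [MvPowerSeries.X_pow_eq, M]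

lemma x_pow (n : ℕ) : (MvPowerSeries.X 0 : MvPowerSeries (Fin 3) k) ^ n = M (EE n 0 0) := by
  rw [X_eq_M]; simp [EE]

lemma y_pow (n : ℕ) : (MvPowerSeries.X 1 : MvPowerSeries (Fin 3) k) ^ n = M (EE 0 n 0) := by
  rw [X_eq_M]; simp [EE]

lemma z_pow (n : ℕ) : (MvPowerSeries.X 2 : MvPowerSeries (Fin 3) k) ^ n = M (EE 0 0 n) := by
  rw [X_eq_M]; simp [EE]


lemma EE_le_add (a b c d u v : ℕ) (e : Fin 3 →₀ ℕ) :
    EE a b c ≤ e + EE d u v ↔ a ≤ e 0 + d ∧ b ≤ e 1 + u ∧ c ≤ e 2 + v := by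
  rw [EE_le]
  simp [Finsupp.add_apply, (EE_apply d u v).1, (EE_apply d u v).2.1, (EE_apply d u v).2.2]

lemma exists_fin3 {P : Fin 3 → Prop} : (∃ i, P i) ↔ P 0 ∨ P 1 ∨ P 2 :=
  ⟨by rintro ⟨i, hi⟩; fin_cases i;
      exacts [Or.inl hi, Or.inr (Or.inl hi), Or.inr (Or.inr hi)],
   by rintro (h | h | h); exacts [⟨_, h⟩, ⟨_, h⟩, ⟨_, h⟩]⟩

lemma exists_fin4 {P : Fin 4 → Prop} : (∃ i, P i) ↔ P 0 ∨ P 1 ∨ P 2 ∨ P 3 :=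
  ⟨by rintro ⟨i, hi⟩; fin_cases i;
      exacts [Or.inl hi, Or.inr (Or.inl hi), Or.inr (Or.inr (Or.inl hi)),
        Or.inr (Or.inr (Or.inr hi))],
   by rintro (h | h | h | h); exacts [⟨_, h⟩, ⟨_, h⟩, ⟨_, h⟩, ⟨_, h⟩]⟩

lemma exists_fin9 {P : Fin 9 → Prop} :
    (∃ i, P i) ↔ P 0 ∨ P 1 ∨ P 2 ∨ P 3 ∨ P 4 ∨ P 5 ∨ P 6 ∨ P 7 ∨ P 8 :=
  ⟨by rintro ⟨i, hi⟩; fin_cases i;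
      exacts [Or.inl hi, Or.inr (Or.inl hi), Or.inr (Or.inr (Or.inl hi)),
        Or.inr (Or.inr (Or.inr (Or.inl hi))),
        Or.inr (Or.inr (Or.inr (Or.inr (Or.inl hi)))),
        Or.inr (Or.inr (Or.inr (Or.inr (Or.inr (Or.inl hi))))),
        Or.inr (Or.inr (Or.inr (Or.inr (Or.inr (Or.inr (Or.inl hi)))))),
        Or.inr (Or.inr (Or.inr (Or.inr (Or.inr (Or.inr (Or.inr (Or.inl hi))))))),
        Or.inr (Or.inr (Or.inr (Or.inr (Or.inr (Or.inr (Or.inr (Or.inr hi)))))))],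
   by rintro (h | h | h | h | h | h | h | h | h);
      exacts [⟨_, h⟩, ⟨_, h⟩, ⟨_, h⟩, ⟨_, h⟩, ⟨_, h⟩, ⟨_, h⟩, ⟨_, h⟩, ⟨_, h⟩, ⟨_, h⟩]⟩

lemma forall_fin3 {P : Fin 3 → Prop} : (∀ i, P i) ↔ P 0 ∧ P 1 ∧ P 2 :=
  ⟨fun h => ⟨h 0, h 1, h 2⟩, by rintro ⟨h0, h1, h2⟩ i; fin_cases i; exacts [h0, h1, h2]⟩

/-- exponents of the generators of `I` -/
noncomputable def IA : Fin 3 → Fin 3 →₀ ℕ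
  | 0 => EE 2 1 0 | 1 => EE 1 2 1 | 2 => EE 0 0 3

lemma IA_0 : IA 0 = EE 2 1 0 := rfl
lemma IA_1 : IA 1 = EE 1 2 1 := rfl
lemma IA_2 : IA 2 = EE 0 0 3 := rfl

/-- exponents of the generators of `I : N` -/
noncomputable def KA : Fin 3 → Fin 3 →₀ ℕ
  | 0 => EE 2 1 0 | 1 => EE 1 1 1 | 2 => EE 0 0 3

lemma KA_0 : KA 0 = EE 2 1 0 := rfl
lemma KA_1 : KA 1 = EE 1 1 1 := rfl
lemma KA_2 : KA 2 = EE 0 0 3 := rfl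

/-- exponents of the generators of `n*I` -/
noncomputable def PA : Fin 9 → Fin 3 →₀ ℕ
  | 0 => EE 3 1 0 | 1 => EE 2 2 1 | 2 => EE 1 0 3
  | 3 => EE 2 2 0 | 4 => EE 1 3 1 | 5 => EE 0 1 3
  | 6 => EE 2 1 1 | 7 => EE 1 2 2 | 8 => EE 0 0 4

lemma PA_0 : PA 0 = EE 3 1 0 := rfl
lemma PA_1 : PA 1 = EE 2 2 1 := rfl
lemma PA_2 : PA 2 = EE 1 0 3 := rfl
lemma PA_3 : PA 3 = EE 2 2 0 := rfl
lemma PA_4 : PA 4 = EE 1 3 1 := rfl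
lemma PA_5 : PA 5 = EE 0 1 3 := rfl
lemma PA_6 : PA 6 = EE 2 1 1 := rfl
lemma PA_7 : PA 7 = EE 1 2 2 := rfl
lemma PA_8 : PA 8 = EE 0 0 4 := rfl

/-- exponents of the generators of the answer ideal -/
noncomputable def JA : Fin 4 → Fin 3 →₀ ℕ
  | 0 => EE 1 0 0 | 1 => EE 0 0 2 | 2 => EE 0 1 1 | 3 => EE 0 2 0

lemma JA_0 : JA 0 = EE 1 0 0 := rfl
lemma JA_1 : JA 1 = EE 0 0 2 := rfl
lemma JA_2 : JA 2 = EE 0 1 1 := rfl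
lemma JA_3 : JA 3 = EE 0 2 0 := rfl

end BurchAux

open BurchAux

/-- For `S = k[[x,y,z]]`, `I = (x²y, xy²z, z³)` and `N = (x², y, z²)`, one has
`nI : (I : N) = (x, z², yz, y²)` where `n = (x,y,z)`. -/
theorem burchIdeal_three_vars_example (k : Type*) [Field k] :
    let S := MvPowerSeries (Fin 3) k
    let x : S := MvPowerSeries.X 0
    let y : S := MvPowerSeries.X 1
    let z : S := MvPowerSeries.X 2
    let n : Ideal S := Ideal.span {x, y, z}
    let I : Ideal S := Ideal.span {x ^ 2 * y, x * y ^ 2 * z, z ^ 3}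
    let N : Ideal S := Ideal.span {x ^ 2, y, z ^ 2}
    (n * I).colon (I.colon N) = Ideal.span {x, z ^ 2, y * z, y ^ 2} := by
  intro S x y z n I N
  classical
  -- generators as monomials
  have hx : x = M (EE 1 0 0) := by rw [← pow_one x]; exact x_pow 1
  have hy : y = M (EE 0 1 0) := by rw [← pow_one y]; exact y_pow 1
  have hz : z = M (EE 0 0 1) := by rw [← pow_one z]; exact z_pow 1
  have hx2 : x ^ 2 = M (EE 2 0 0) := x_pow 2
  have hy2 : y ^ 2 = M (EE 0 2 0) := y_pow 2
  have hz2 : z ^ 2 = M (EE 0 0 2) := z_pow 2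
  have hz3 : z ^ 3 = M (EE 0 0 3) := z_pow 3
  have hg1 : x ^ 2 * y = M (EE 2 1 0) := by rw [hx2, hy, M_mul]
  have hg2 : x * y ^ 2 * z = M (EE 1 2 1) := by rw [hx, hy2, hz, M_mul, M_mul]
  have hyz : y * z = M (EE 0 1 1) := by rw [hy, hz, M_mul]
  -- the nine products generating n*I
  have p1 : x * (x ^ 2 * y) = M (EE 3 1 0) := by rw [hg1, hx, M_mul]
  have p2 : x * (x * y ^ 2 * z) = M (EE 2 2 1) := by rw [hg2, hx, M_mul]
  have p3 : x * z ^ 3 = M (EE 1 0 3) := by rw [hz3, hx, M_mul]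
  have p4 : y * (x ^ 2 * y) = M (EE 2 2 0) := by rw [hg1, hy, M_mul]
  have p5 : y * (x * y ^ 2 * z) = M (EE 1 3 1) := by rw [hg2, hy, M_mul]
  have p6 : y * z ^ 3 = M (EE 0 1 3) := by rw [hz3, hy, M_mul]
  have p7 : z * (x ^ 2 * y) = M (EE 2 1 1) := by rw [hg1, hz, M_mul]
  have p8 : z * (x * y ^ 2 * z) = M (EE 1 2 2) := by rw [hg2, hz, M_mul]
  have p9 : z * z ^ 3 = M (EE 0 0 4) := by rw [hz3, hz, M_mul]
  -- I as a range-indexed monomial ideal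
  have hI : I = Ideal.span (Set.range fun i => (M (IA i) : MvPowerSeries (Fin 3) k)) := by
    show Ideal.span _ = _
    congr 1
    ext u
    simp only [Set.mem_insert_iff, Set.mem_singleton_iff, Set.mem_range]
    constructor
    · rintro (rfl | rfl | rfl)
      · exact ⟨0, by rw [IA_0]; exact hg1.symm⟩
      · exact ⟨1, by rw [IA_1]; exact hg2.symm⟩
      · exact ⟨2, by rw [IA_2]; exact hz3.symm⟩
    · rintro ⟨i, rfl⟩
      fin_cases i
      exacts [Or.inl hg1.symm, Or.inr (Or.inl hg2.symm), Or.inr (Or.inr hz3.symm)]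
  -- n*I as a range-indexed monomial ideal
  have hnI : n * I = Ideal.span (Set.range fun i => (M (PA i) : MvPowerSeries (Fin 3) k)) := by
    show Ideal.span _ * Ideal.span _ = _
    rw [Ideal.span_mul_span']
    congr 1
    ext u
    simp only [Set.mem_mul, Set.mem_insert_iff, Set.mem_singleton_iff, Set.mem_range]
    constructor
    · rintro ⟨a, ha, b, hb, rfl⟩
      rcases ha with rfl | rfl | rfl <;> rcases hb with rfl | rfl | rfl
      · exact ⟨0, by rw [PA_0]; exact p1.symm⟩
      · exact ⟨1, by rw [PA_1]; exact p2.symm⟩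
      · exact ⟨2, by rw [PA_2]; exact p3.symm⟩
      · exact ⟨3, by rw [PA_3]; exact p4.symm⟩
      · exact ⟨4, by rw [PA_4]; exact p5.symm⟩
      · exact ⟨5, by rw [PA_5]; exact p6.symm⟩
      · exact ⟨6, by rw [PA_6]; exact p7.symm⟩
      · exact ⟨7, by rw [PA_7]; exact p8.symm⟩
      · exact ⟨8, by rw [PA_8]; exact p9.symm⟩
    · rintro ⟨i, rfl⟩
      fin_cases i
      · exact ⟨x, Or.inl rfl, x ^ 2 * y, Or.inl rfl, p1⟩
      · exact ⟨x, Or.inl rfl, x * y ^ 2 * z, Or.inr (Or.inl rfl), p2⟩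
      · exact ⟨x, Or.inl rfl, z ^ 3, Or.inr (Or.inr rfl), p3⟩
      · exact ⟨y, Or.inr (Or.inl rfl), x ^ 2 * y, Or.inl rfl, p4⟩
      · exact ⟨y, Or.inr (Or.inl rfl), x * y ^ 2 * z, Or.inr (Or.inl rfl), p5⟩
      · exact ⟨y, Or.inr (Or.inl rfl), z ^ 3, Or.inr (Or.inr rfl), p6⟩
      · exact ⟨z, Or.inr (Or.inr rfl), x ^ 2 * y, Or.inl rfl, p7⟩
      · exact ⟨z, Or.inr (Or.inr rfl), x * y ^ 2 * z, Or.inr (Or.inl rfl), p8⟩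
      · exact ⟨z, Or.inr (Or.inr rfl), z ^ 3, Or.inr (Or.inr rfl), p9⟩
  -- the answer ideal as a range-indexed monomial ideal
  have hJ : Ideal.span {x, z ^ 2, y * z, y ^ 2} =
      Ideal.span (Set.range fun i => (M (JA i) : MvPowerSeries (Fin 3) k)) := by
    congr 1
    ext u
    simp only [Set.mem_insert_iff, Set.mem_singleton_iff, Set.mem_range]
    constructor
    · rintro (rfl | rfl | rfl | rfl)
      · exact ⟨0, by rw [JA_0]; exact hx.symm⟩
      · exact ⟨1, by rw [JA_1]; exact hz2.symm⟩
      · exact ⟨2, by rw [JA_2]; exact hyz.symm⟩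
      · exact ⟨3, by rw [JA_3]; exact hy2.symm⟩
    · rintro ⟨i, rfl⟩
      fin_cases i
      exacts [Or.inl hx.symm, Or.inr (Or.inl hz2.symm),
        Or.inr (Or.inr (Or.inl hyz.symm)), Or.inr (Or.inr (Or.inr hy2.symm))]
  -- compute the colon ideal I : N
  have hIN : I.colon N = Ideal.span (Set.range fun i => (M (KA i) : MvPowerSeries (Fin 3) k)) := by
    ext f
    rw [show N = Ideal.span {x ^ 2, y, z ^ 2} from rfl, mem_colon_span,
      mem_span_mono (by norm_num)]
    constructor
    · intro hmem e he
      have h1 := hmem (x ^ 2) (Or.inl rfl)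
      have h2 := hmem y (Or.inr (Or.inl rfl))
      have h3 := hmem (z ^ 2) (Or.inr (Or.inr rfl))
      rw [hx2, hI, mul_mono_mem_iff (by norm_num)] at h1
      rw [hy, hI, mul_mono_mem_iff (by norm_num)] at h2
      rw [hz2, hI, mul_mono_mem_iff (by norm_num)] at h3
      have h1' := h1 e he
      have h2' := h2 e he
      have h3' := h3 e he
      rw [exists_fin3, IA_0, IA_1, IA_2, EE_le_add, EE_le_add, EE_le_add] at h1' h2' h3'
      rw [exists_fin3, KA_0, KA_1, KA_2, EE_le, EE_le, EE_le]
      omega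
    · intro h
      intro g hg
      have key : ∀ e, coeff e f ≠ 0 → ∃ i, KA i ≤ e := h
      rcases hg with rfl | rfl | rfl
      · rw [hx2, hI, mul_mono_mem_iff (by norm_num)]
        intro e he
        have h' := key e he
        rw [exists_fin3, KA_0, KA_1, KA_2, EE_le, EE_le, EE_le] at h'
        rw [exists_fin3, IA_0, IA_1, IA_2, EE_le_add, EE_le_add, EE_le_add]
        omega
      · rw [hy, hI, mul_mono_mem_iff (by norm_num)]
        intro e he
        have h' := key e he
        rw [exists_fin3, KA_0, KA_1, KA_2, EE_le, EE_le, EE_le] at h'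
        rw [exists_fin3, IA_0, IA_1, IA_2, EE_le_add, EE_le_add, EE_le_add]
        omega
      · rw [hz2, hI, mul_mono_mem_iff (by norm_num)]
        intro e he
        have h' := key e he
        rw [exists_fin3, KA_0, KA_1, KA_2, EE_le, EE_le, EE_le] at h'
        rw [exists_fin3, IA_0, IA_1, IA_2, EE_le_add, EE_le_add, EE_le_add]
        omega
  -- main computation
  ext f
  rw [hIN, hJ, mem_colon_span, mem_span_mono (by norm_num)]
  constructor
  · intro hmem e he
    have h1 := hmem (M (KA 0)) ⟨0, rfl⟩
    have h2 := hmem (M (KA 1)) ⟨1, rfl⟩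
    have h3 := hmem (M (KA 2)) ⟨2, rfl⟩
    rw [KA_0, hnI, mul_mono_mem_iff (by norm_num)] at h1
    rw [KA_1, hnI, mul_mono_mem_iff (by norm_num)] at h2
    rw [KA_2, hnI, mul_mono_mem_iff (by norm_num)] at h3
    have h1' := h1 e he
    have h2' := h2 e he
    have h3' := h3 e he
    rw [exists_fin9, PA_0, PA_1, PA_2, PA_3, PA_4, PA_5, PA_6, PA_7, PA_8,
      EE_le_add, EE_le_add, EE_le_add, EE_le_add, EE_le_add, EE_le_add,
      EE_le_add, EE_le_add, EE_le_add] at h1' h2' h3'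
    rw [exists_fin4, JA_0, JA_1, JA_2, JA_3, EE_le, EE_le, EE_le, EE_le]
    omega
  · intro h g hg
    rw [Set.mem_range, exists_fin3] at hg
    rcases hg with rfl | rfl | rfl <;>
      [rw [KA_0, hnI, mul_mono_mem_iff (by norm_num)];
       rw [KA_1, hnI, mul_mono_mem_iff (by norm_num)];
       rw [KA_2, hnI, mul_mono_mem_iff (by norm_num)]] <;>
    · intro e he
      have h' := h e he
      rw [exists_fin4, JA_0, JA_1, JA_2, JA_3, EE_le, EE_le, EE_le, EE_le] at h'
      rw [exists_fin9, PA_0, PA_1, PA_2, PA_3, PA_4, PA_5, PA_6, PA_7, PA_8,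
        EE_le_add, EE_le_add, EE_le_add, EE_le_add, EE_le_add, EE_le_add,
        EE_le_add, EE_le_add, EE_le_add]
      omega
end

section
/- Let S = k[[x,y,z,w]] and I = (xz, yz, zw, xw). Then the annihilator of the maximal ideal in R = S/I is zero, i.e., depth(R) > 0; equivalently (I : n) = I where n = (x,y,z,w). -/
open MvPowerSeries

section Aux

variable {k : Type*} [Field k]

/-- exponent vectors of the four generators xz, yz, zw, xw -/
noncomputable def mvec : Fin 4 → (Fin 4 →₀ ℕ) :=
  ![Finsupp.single 0 1 + Finsupp.single 2 1,
    Finsupp.single 1 1 + Finsupp.single 2 1,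
    Finsupp.single 2 1 + Finsupp.single 3 1,
    Finsupp.single 0 1 + Finsupp.single 3 1]

lemma mvec_le_iff (d : Fin 4 →₀ ℕ) :
    ((mvec 0 ≤ d ↔ 1 ≤ d 0 ∧ 1 ≤ d 2) ∧ (mvec 1 ≤ d ↔ 1 ≤ d 1 ∧ 1 ≤ d 2)) ∧
    (mvec 2 ≤ d ↔ 1 ≤ d 2 ∧ 1 ≤ d 3) ∧ (mvec 3 ≤ d ↔ 1 ≤ d 0 ∧ 1 ≤ d 3) := by
  refine ⟨⟨?_, ?_⟩, ?_, ?_⟩ <;>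
  · rw [Finsupp.le_def]
    constructor
    · intro h
      constructor <;> · have h1 := h 0; have h2 := h 1; have h3 := h 2; have h4 := h 3
                        simp [mvec, Finsupp.single_apply] at h1 h2 h3 h4 ⊢; omega
    · rintro ⟨ha, hb⟩ s
      fin_cases s <;> simp [mvec, Finsupp.single_apply] <;> omega

lemma genXX : (X 0 * X 2 : MvPowerSeries (Fin 4) k) = monomial (mvec 0) 1 ∧
    (X 1 * X 2 : MvPowerSeries (Fin 4) k) = monomial (mvec 1) 1 ∧
    (X 2 * X 3 : MvPowerSeries (Fin 4) k) = monomial (mvec 2) 1 ∧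
    (X 0 * X 3 : MvPowerSeries (Fin 4) k) = monomial (mvec 3) 1 := by
  refine ⟨?_, ?_, ?_, ?_⟩ <;>
    simp [X, monomial_mul_monomial, mvec]

/-- which generator a monomial is assigned to -/
noncomputable def branch (d : Fin 4 →₀ ℕ) : Fin 4 :=
  open scoped Classical in
  if mvec 0 ≤ d then 0 else if mvec 1 ≤ d then 1 else if mvec 2 ≤ d then 2 else 3

lemma branch_le {d : Fin 4 →₀ ℕ} (h : ∃ i, mvec i ≤ d) : mvec (branch d) ≤ d := by
  classical
  unfold branch
  split_ifs with h0 h1 h2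
  · simpa
  · simpa
  · simpa
  · obtain ⟨i, hi⟩ := h
    fin_cases i <;> simp_all

lemma key (f : MvPowerSeries (Fin 4) k) :
    f ∈ Ideal.span {(X 0 * X 2 : MvPowerSeries (Fin 4) k), X 1 * X 2, X 2 * X 3, X 0 * X 3} ↔
      ∀ d : Fin 4 →₀ ℕ, coeff d f ≠ 0 → ∃ i, mvec i ≤ d := by
  classical
  obtain ⟨h0, h1, h2, h3⟩ := genXX (k := k)
  rw [h0, h1, h2, h3]
  constructor
  · intro hf d hd
    by_contra hD
    push_neg at hD
    rw [Ideal.mem_span_insert] at hf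
    obtain ⟨a, f1, hf1, rfl⟩ := hf
    rw [Ideal.mem_span_insert] at hf1
    obtain ⟨b, f2, hf2, rfl⟩ := hf1
    rw [Ideal.mem_span_insert] at hf2
    obtain ⟨c, f3, hf3, rfl⟩ := hf2
    rw [Ideal.mem_span_singleton'] at hf3
    obtain ⟨e, rfl⟩ := hf3
    simp only [map_add, coeff_mul_monomial] at hd
    rw [if_neg (hD 0), if_neg (hD 1), if_neg (hD 2), if_neg (hD 3)] at hd
    simp at hd
  · intro hf
    set a : Fin 4 → MvPowerSeries (Fin 4) k := fun i d =>
      if branch (d + mvec i) = i then coeff (d + mvec i) f else 0 with ha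
    have : f = a 0 * monomial (mvec 0) 1 + (a 1 * monomial (mvec 1) 1 +
        (a 2 * monomial (mvec 2) 1 + a 3 * monomial (mvec 3) 1)) := by
      ext d
      simp only [map_add, coeff_mul_monomial, mul_one]
      have hterm : ∀ i : Fin 4,
          (if mvec i ≤ d then coeff (d - mvec i) (a i) else 0) =
            if mvec i ≤ d ∧ branch d = i then coeff d f else 0 := by
        intro i
        by_cases h : mvec i ≤ d
        · rw [if_pos h, ha]
          simp only [coeff_apply]
          change (if branch (d - mvec i + mvec i) = i then coeff (d - mvec i + mvec i) f else 0) =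
            if mvec i ≤ d ∧ branch d = i then coeff d f else 0
          rw [tsub_add_cancel_of_le h]
          by_cases hb : branch d = i
          · rw [if_pos hb, if_pos ⟨h, hb⟩]
          · rw [if_neg hb, if_neg (fun hc => hb hc.2)]
        · rw [if_neg h, if_neg (fun hc => h hc.1)]
      rw [hterm 0, hterm 1, hterm 2, hterm 3]
      by_cases hd : coeff d f = 0
      · rw [hd]; simp
      · obtain hP := hf d hd
        have hble := branch_le hP
        set i0 := branch d with hi0
        have honce : ∀ i : Fin 4,
            (if mvec i ≤ d ∧ branch d = i then coeff d f else 0) =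
              if i = i0 then coeff d f else 0 := by
          intro i
          by_cases hi : i = i0
          · subst hi; rw [if_pos rfl, if_pos ⟨hble, rfl⟩]
          · rw [if_neg hi, if_neg (fun hc => hi hc.2.symm)]
        rw [honce 0, honce 1, honce 2, honce 3]
        clear_value i0
        fin_cases i0 <;> simp
    rw [this]
    apply Ideal.add_mem _ (Ideal.mul_mem_left _ _ (Ideal.subset_span (by simp)))
    apply Ideal.add_mem _ (Ideal.mul_mem_left _ _ (Ideal.subset_span (by simp)))
    apply Ideal.add_mem _ (Ideal.mul_mem_left _ _ (Ideal.subset_span (by simp)))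
    exact Ideal.mul_mem_left _ _ (Ideal.subset_span (by simp))

end Aux

lemma exists_mvec_le_iff (e : Fin 4 →₀ ℕ) :
    (∃ i, mvec i ≤ e) ↔ ((1 ≤ e 0 ∧ 1 ≤ e 2) ∨ (1 ≤ e 1 ∧ 1 ≤ e 2) ∨
      (1 ≤ e 2 ∧ 1 ≤ e 3) ∨ (1 ≤ e 0 ∧ 1 ≤ e 3)) := by
  obtain ⟨⟨q0, q1⟩, q2, q3⟩ := mvec_le_iff e
  constructor
  · rintro ⟨i, hi⟩
    fin_cases i
    · exact Or.inl (q0.mp hi)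
    · exact Or.inr (Or.inl (q1.mp hi))
    · exact Or.inr (Or.inr (Or.inl (q2.mp hi)))
    · exact Or.inr (Or.inr (Or.inr (q3.mp hi)))
  · rintro (h | h | h | h)
    exacts [⟨0, q0.mpr h⟩, ⟨1, q1.mpr h⟩, ⟨2, q2.mpr h⟩, ⟨3, q3.mpr h⟩]

/-- For `S = k[[x,y,z,w]]` and `I = (xz, yz, zw, xw)`, one has `(I : n) = I` where
`n = (x,y,z,w)`; i.e. the annihilator of the maximal ideal in `R = S/n` is zero and
`R` has positive depth. -/
theorem positive_depth_example (k : Type*) [Field k] :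
    let S := MvPowerSeries (Fin 4) k
    let x : S := MvPowerSeries.X 0
    let y : S := MvPowerSeries.X 1
    let z : S := MvPowerSeries.X 2
    let w : S := MvPowerSeries.X 3
    let n : Ideal S := Ideal.span {x, y, z, w}
    let I : Ideal S := Ideal.span {x * z, y * z, z * w, x * w}
    I.colon n = I := by
  intro S x y z w n I
  refine le_antisymm ?_ ?_
  · intro f hf
    have hmem : ∀ i : Fin 4, (X i : S) ∈ ({x, y, z, w} : Set S) := by
      intro i
      fin_cases i
      · exact Set.mem_insert _ _
      · exact Set.mem_insert_of_mem _ (Set.mem_insert _ _)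
      · exact Set.mem_insert_of_mem _ (Set.mem_insert_of_mem _ (Set.mem_insert _ _))
      · exact Set.mem_insert_of_mem _ (Set.mem_insert_of_mem _
          (Set.mem_insert_of_mem _ rfl))
    have h : ∀ i : Fin 4, f * X i ∈ I := by
      intro i
      have := Submodule.mem_colon.mp hf _ (Ideal.subset_span (hmem i))
      rwa [smul_eq_mul] at this
    have H : ∀ i : Fin 4, ∀ d : Fin 4 →₀ ℕ, coeff d (f * X i) ≠ 0 →
        ∃ j, mvec j ≤ d := fun i => (key (f * X i)).mp (h i)
    have Hcoeff : ∀ (i : Fin 4) (d : Fin 4 →₀ ℕ),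
        coeff (d + Finsupp.single i 1) (f * X i) = coeff d f := by
      intro i d
      rw [X, coeff_add_mul_monomial, mul_one]
    refine (key f).mpr fun d hd => ?_
    have A := fun i : Fin 4 => (exists_mvec_le_iff _).mp
      (H i (d + Finsupp.single i 1) (by rw [Hcoeff]; exact hd))
    have A0 := A 0; have A1 := A 1; have A2 := A 2; have A3 := A 3
    simp [Finsupp.add_apply, Finsupp.single_apply] at A0 A1 A2 A3
    rw [exists_mvec_le_iff]
    omega
  · intro f hf
    rw [Submodule.mem_colon]
    intro p _
    rw [smul_eq_mul]
    exact Ideal.mul_mem_right p I hf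
end

section
/- Minimal generators of Tor, strengthened: With R local Noetherian, X with minimal free resolution (F_•, A_•), Y finitely generated, e a basis element of F_j and f a minimal generator of Y with e ⊗ f ∈ ker(A_j ⊗ Y), the class of e ⊗ f in Tor_j(X, Y) does not lie in m·Tor_j(X, Y), i.e., it is a minimal generator of Tor_j(X, Y). -/
open TensorProduct

lemma tmul_mem_smul_top {R M N : Type*} [CommRing R] [AddCommGroup M] [Module R M]
    [AddCommGroup N] [Module R N] (I : Ideal R) {v : M}
    (hv : v ∈ I • (⊤ : Submodule R M)) (y : N) :
    v ⊗ₜ[R] y ∈ I • (⊤ : Submodule R (M ⊗[R] N)) := by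
  refine Submodule.smul_induction_on hv (fun r hr m _ => ?_) (fun a b ha hb => ?_)
  · rw [← TensorProduct.smul_tmul']
    exact Submodule.smul_mem_smul hr Submodule.mem_top
  · rw [TensorProduct.add_tmul]; exact Submodule.add_mem _ ha hb

lemma range_rTensor_le_smul_top {R M M' N : Type*} [CommRing R]
    [AddCommGroup M] [Module R M] [AddCommGroup M'] [Module R M']
    [AddCommGroup N] [Module R N] (I : Ideal R) (A : M →ₗ[R] M')
    (hA : LinearMap.range A ≤ I • (⊤ : Submodule R M')) :
    LinearMap.range (A.rTensor N) ≤ I • (⊤ : Submodule R (M' ⊗[R] N)) := by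
  rintro _ ⟨z, rfl⟩
  induction z using TensorProduct.induction_on with
  | zero => simp
  | tmul a y =>
      rw [LinearMap.rTensor_tmul]
      exact tmul_mem_smul_top I (hA ⟨a, rfl⟩) y
  | add a b ha hb => rw [map_add]; exact Submodule.add_mem _ ha hb

/-- Minimal generators of Tor, strengthened: with notation as before, the class of
`e ⊗ f` in `Tor_j(X,Y) = ker(A₀ ⊗ Y)/im(A₁ ⊗ Y)` does not lie in `m·Tor_j(X,Y)`,
i.e. it is a minimal generator of `Tor_j(X,Y)`. -/
theorem tor_minimal_generator
    {R : Type*} [CommRing R] [IsNoetherianRing R] [IsLocalRing R]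
    {Fj1 Fj Fj0 Y : Type*}
    [AddCommGroup Fj1] [Module R Fj1] [Module.Free R Fj1] [Module.Finite R Fj1]
    [AddCommGroup Fj] [Module R Fj] [Module.Free R Fj] [Module.Finite R Fj]
    [AddCommGroup Fj0] [Module R Fj0] [Module.Free R Fj0] [Module.Finite R Fj0]
    [AddCommGroup Y] [Module R Y] [Module.Finite R Y]
    (A1 : Fj1 →ₗ[R] Fj) (A0 : Fj →ₗ[R] Fj0)
    (hcomp : A0 ∘ₗ A1 = 0)
    (hmin : LinearMap.range A1 ≤ (IsLocalRing.maximalIdeal R) • (⊤ : Submodule R Fj))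
    {ι : Type*} (b : Module.Basis ι R Fj) (i : ι)
    (f : Y) (hf : f ∉ (IsLocalRing.maximalIdeal R) • (⊤ : Submodule R Y))
    (hker : b i ⊗ₜ[R] f ∈ LinearMap.ker (A0.rTensor Y)) :
    (Submodule.Quotient.mk (⟨b i ⊗ₜ[R] f, hker⟩ : LinearMap.ker (A0.rTensor Y)) :
        LinearMap.ker (A0.rTensor Y) ⧸
          (LinearMap.range (A1.rTensor Y)).comap (LinearMap.ker (A0.rTensor Y)).subtype)
      ∉ (IsLocalRing.maximalIdeal R) •
          (⊤ : Submodule R (LinearMap.ker (A0.rTensor Y) ⧸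
            (LinearMap.range (A1.rTensor Y)).comap
              (LinearMap.ker (A0.rTensor Y)).subtype)) := by
  intro h
  set I := IsLocalRing.maximalIdeal R
  set K := LinearMap.ker (A0.rTensor Y)
  set P := (LinearMap.range (A1.rTensor Y)).comap K.subtype
  -- pull back membership through the quotient map
  have hmap : (I • (⊤ : Submodule R (K ⧸ P))) = Submodule.map P.mkQ (I • ⊤) := by
    rw [Submodule.map_smul'', Submodule.map_top, Submodule.range_mkQ]
  rw [hmap, Submodule.mem_map] at h
  obtain ⟨x, hx, hxe⟩ := h
  have hdiff : (⟨b i ⊗ₜ[R] f, hker⟩ : K) - x ∈ P := by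
    rw [← Submodule.Quotient.eq]
    exact (hxe).symm
  -- now in Fj ⊗ Y
  have h1 : (x : Fj ⊗[R] Y) ∈ I • (⊤ : Submodule R (Fj ⊗[R] Y)) := by
    have := (Submodule.mem_smul_top_iff I K x).mp hx
    exact SetLike.le_def.mp (smul_mono_right I le_top) this
  have h2 : (b i ⊗ₜ[R] f) - (x : Fj ⊗[R] Y) ∈ I • (⊤ : Submodule R (Fj ⊗[R] Y)) := by
    have : ((⟨b i ⊗ₜ[R] f, hker⟩ : K) - x : K) ∈ P := hdiff
    have hr : ((⟨b i ⊗ₜ[R] f, hker⟩ : K) - x : K).1 ∈ LinearMap.range (A1.rTensor Y) := this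
    exact range_rTensor_le_smul_top I A1 hmin hr
  have hall : (b i ⊗ₜ[R] f) ∈ I • (⊤ : Submodule R (Fj ⊗[R] Y)) := by
    have := Submodule.add_mem _ h2 h1
    simpa using this
  -- apply coordinate functional tensored with Y
  set g : Fj ⊗[R] Y →ₗ[R] Y :=
    (TensorProduct.lid R Y).toLinearMap ∘ₗ (b.coord i).rTensor Y with hg
  have hgmem : g (b i ⊗ₜ[R] f) ∈ I • (⊤ : Submodule R Y) := by
    have : g (b i ⊗ₜ[R] f) ∈ Submodule.map g (I • ⊤) :=
      Submodule.mem_map_of_mem hall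
    rw [Submodule.map_smul''] at this
    exact SetLike.le_def.mp (smul_mono_right I le_top) this
  have hgval : g (b i ⊗ₜ[R] f) = f := by
    simp [hg]
  rw [hgval] at hgmem
  exact hf hgmem
end
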